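/- Consider the gradient-push algorithm where each f_i has L-Lipschitz gradient and f := (1/n) Σ_{i=1}^n f_i is β-strongly convex with minimizer w_*. Assume α ≤ 2/(L+β), ρ := σ_W(1 + αLδ) < 1, and that there exists R > 0 with ‖w̄(t) − w_*‖ ≤ R for all t ≥ 0. Set D_1 := δ‖1_n − nπ‖_π + (Σ_{j=1}^n 1/π_j)^{1/2}, D_2 := Lδ‖1_n − nπ‖_π ‖w_*‖ + ‖∇F(1_n⊗w_*)‖_{π⊗1_d}, and R̄ := L D_1 R + D_2. Then for all t ≥ 0, ‖w(t) − nπ⊗w̄(t)‖_{π⊗1_d} ≤ ρ^t ‖w(0) − nπ⊗w̄(0)‖_{π⊗1_d} + ασ_W R̄/(1−ρ). -/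

import Mathlib

open Finset

/-- π-weighted norm on ℝ^n: ‖x‖_π = (Σ_j x_j²/π_j)^{1/2}. -/
noncomputable def wnorm {n : ℕ} (p : Fin n → ℝ) (x : Fin n → ℝ) : ℝ :=
  Real.sqrt (∑ j, x j ^ 2 / p j)

/-- Matrix operator norm induced by the π-weighted norm. -/
noncomputable def matNorm {n : ℕ} (p : Fin n → ℝ) (A : Matrix (Fin n) (Fin n) ℝ) : ℝ :=
  ⨆ x : {x : Fin n → ℝ // x ≠ 0}, wnorm p (A.mulVec x.1) / wnorm p x.1

/-- Block weighted norm on (ℝ^d)^n: ‖x‖_{π⊗1_d} = (Σ_j ‖x_j‖²/π_j)^{1/2}. -/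
noncomputable def bnorm {n d : ℕ} (p : Fin n → ℝ)
    (x : Fin n → EuclideanSpace ℝ (Fin d)) : ℝ :=
  Real.sqrt (∑ j, ‖x j‖ ^ 2 / p j)

/-- Blockwise action of the Kronecker product A ⊗ I_d on (ℝ^d)^n. -/
noncomputable def kron {n d : ℕ} (A : Matrix (Fin n) (Fin n) ℝ)
    (x : Fin n → EuclideanSpace ℝ (Fin d)) : Fin n → EuclideanSpace ℝ (Fin d) :=
  fun i => ∑ j, A i j • x j

/-- Operator norm of A ⊗ I_d induced by ‖·‖_{π⊗1_d}. -/
noncomputable def bopNorm {n : ℕ} (d : ℕ) (p : Fin n → ℝ)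
    (A : Matrix (Fin n) (Fin n) ℝ) : ℝ :=
  ⨆ x : {x : Fin n → EuclideanSpace ℝ (Fin d) // x ≠ 0},
    bnorm p (kron A x.1) / bnorm p x.1

/-- Euclidean norm on (ℝ^d)^n. -/
noncomputable def enormB {n d : ℕ} (x : Fin n → EuclideanSpace ℝ (Fin d)) : ℝ :=
  Real.sqrt (∑ j, ‖x j‖ ^ 2)

/-!
Auxiliary lemmas
-/

section basics
variable {n d : ℕ} {p : Fin n → ℝ} (hppos : ∀ i, 0 < p i)

lemma wnorm_nonneg (x : Fin n → ℝ) : 0 ≤ wnorm p x := Real.sqrt_nonneg _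

lemma bnorm_nonneg (x : Fin n → EuclideanSpace ℝ (Fin d)) : 0 ≤ bnorm p x := Real.sqrt_nonneg _

include hppos

lemma wnorm_sq (x : Fin n → ℝ) : wnorm p x ^ 2 = ∑ j, x j ^ 2 / p j := by
  rw [wnorm, Real.sq_sqrt]
  exact Finset.sum_nonneg fun j _ => div_nonneg (sq_nonneg _) (hppos j).le

lemma bnorm_sq (x : Fin n → EuclideanSpace ℝ (Fin d)) :
    bnorm p x ^ 2 = ∑ j, ‖x j‖ ^ 2 / p j := by
  rw [bnorm, Real.sq_sqrt]
  exact Finset.sum_nonneg fun j _ => div_nonneg (sq_nonneg _) (hppos j).le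

lemma wnorm_mono {x x' : Fin n → ℝ} (h : ∀ j, |x j| ≤ |x' j|) :
    wnorm p x ≤ wnorm p x' := by
  apply Real.sqrt_le_sqrt
  apply Finset.sum_le_sum
  intro j _
  exact (div_le_div_iff_of_pos_right (hppos j)).2 (by simpa [sq_abs] using pow_le_pow_left₀ (abs_nonneg _) (h j) 2)

lemma bnorm_mono {x x' : Fin n → EuclideanSpace ℝ (Fin d)} (h : ∀ j, ‖x j‖ ≤ ‖x' j‖) :
    bnorm p x ≤ bnorm p x' := by
  apply Real.sqrt_le_sqrt
  apply Finset.sum_le_sum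
  intro j _
  exact (div_le_div_iff_of_pos_right (hppos j)).2 (pow_le_pow_left₀ (norm_nonneg _) (h j) 2)

lemma wnorm_pos {x : Fin n → ℝ} (hx : x ≠ 0) : 0 < wnorm p x := by
  obtain ⟨j, hj⟩ := Function.ne_iff.1 hx
  apply Real.sqrt_pos.2
  apply Finset.sum_pos' (fun j _ => div_nonneg (sq_nonneg _) (hppos j).le)
  exact ⟨j, Finset.mem_univ j, div_pos (by have := abs_pos.2 hj; nlinarith [sq_abs (x j)]) (hppos j)⟩

omit hppos in
lemma wnorm_neg (x : Fin n → ℝ) : wnorm p (fun j => - x j) = wnorm p x := by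
  simp [wnorm]

end basics

section op
variable {n d : ℕ} {p : Fin n → ℝ} (hppos : ∀ i, 0 < p i) (hpsum : ∑ i, p i = 1)

lemma matNorm_nonneg (A : Matrix (Fin n) (Fin n) ℝ) : 0 ≤ matNorm p A :=
  Real.iSup_nonneg fun x => div_nonneg (wnorm_nonneg _) (wnorm_nonneg _)

include hppos hpsum

lemma sq_le_div_p (a : ℝ) (j : Fin n) : a ^ 2 ≤ a ^ 2 / p j := by
  have hpj : p j ≤ 1 := hpsum ▸ Finset.single_le_sum (fun i _ => (hppos i).le) (Finset.mem_univ j)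
  rw [le_div_iff₀ (hppos j)]
  nlinarith [sq_nonneg a]

lemma wnorm_crude (A : Matrix (Fin n) (Fin n) ℝ) (v : Fin n → ℝ) :
    wnorm p (A.mulVec v) ≤ Real.sqrt (∑ i, (∑ j, (A i j) ^ 2) / p i) * wnorm p v := by
  rw [wnorm, wnorm, ← Real.sqrt_mul (Finset.sum_nonneg fun i _ => div_nonneg (by positivity) (hppos i).le)]
  apply Real.sqrt_le_sqrt
  rw [Finset.sum_mul]
  apply Finset.sum_le_sum
  intro i _
  rw [div_mul_eq_mul_div]
  apply (div_le_div_iff_of_pos_right (hppos i)).2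
  calc A.mulVec v i ^ 2 = (∑ j, A i j * v j) ^ 2 := by rfl
    _ ≤ (∑ j, (A i j) ^ 2) * ∑ j, (v j) ^ 2 := Finset.sum_mul_sq_le_sq_mul_sq _ _ _
    _ ≤ (∑ j, (A i j) ^ 2) * ∑ j, (v j) ^ 2 / p j := by
        apply mul_le_mul_of_nonneg_left _ (by positivity)
        exact Finset.sum_le_sum fun j _ => sq_le_div_p hppos hpsum _ j

lemma mat_bound (A : Matrix (Fin n) (Fin n) ℝ) (v : Fin n → ℝ) :
    wnorm p (A.mulVec v) ≤ matNorm p A * wnorm p v := by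
  rcases eq_or_ne v 0 with rfl | hv
  · have : A.mulVec 0 = 0 := Matrix.mulVec_zero A
    rw [this]
    simp only [wnorm, Pi.zero_apply]
    simp
  · have hbdd : BddAbove (Set.range fun x : {x : Fin n → ℝ // x ≠ 0} =>
        wnorm p (A.mulVec x.1) / wnorm p x.1) := by
      refine ⟨Real.sqrt (∑ i, (∑ j, (A i j) ^ 2) / p i), ?_⟩
      rintro r ⟨x, rfl⟩
      rw [div_le_iff₀ (wnorm_pos hppos x.2)]
      exact wnorm_crude hppos hpsum A x.1
    have h1 : wnorm p (A.mulVec v) / wnorm p v ≤ matNorm p A :=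
      le_ciSup hbdd ⟨v, hv⟩
    rwa [div_le_iff₀ (wnorm_pos hppos hv)] at h1

lemma kron_bound (A : Matrix (Fin n) (Fin n) ℝ) (x : Fin n → EuclideanSpace ℝ (Fin d)) :
    bnorm p (kron A x) ≤ matNorm p A * bnorm p x := by
  have hM := matNorm_nonneg (p := p) A
  have key : bnorm p (kron A x) ^ 2 ≤ (matNorm p A * bnorm p x) ^ 2 := by
    rw [bnorm_sq hppos, mul_pow, bnorm_sq hppos]
    have expand : ∀ i : Fin n, ‖kron A x i‖ ^ 2 = ∑ k, (A.mulVec (fun j => x j k) i) ^ 2 := by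
      intro i
      rw [EuclideanSpace.norm_eq, Real.sq_sqrt (by positivity)]
      refine Finset.sum_congr rfl fun k _ => ?_
      have hk : kron A x i k = ∑ j, A i j * x j k := by
        rw [kron, WithLp.ofLp_sum, Finset.sum_apply]
        exact Finset.sum_congr rfl fun j _ => rfl
      rw [hk, Real.norm_eq_abs, sq_abs]
      simp [Matrix.mulVec, dotProduct]
    calc ∑ i, ‖kron A x i‖ ^ 2 / p i
        = ∑ k, ∑ i, (A.mulVec (fun j => x j k) i) ^ 2 / p i := by
          rw [Finset.sum_comm]
          exact Finset.sum_congr rfl fun i _ => by rw [expand i, Finset.sum_div]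
      _ = ∑ k, wnorm p (A.mulVec (fun j => x j k)) ^ 2 := by
          exact Finset.sum_congr rfl fun k _ => (wnorm_sq hppos _).symm
      _ ≤ ∑ k, (matNorm p A * wnorm p (fun j => x j k)) ^ 2 := by
          refine Finset.sum_le_sum fun k _ => ?_
          exact pow_le_pow_left₀ (wnorm_nonneg _) (mat_bound hppos hpsum A _) 2
      _ = matNorm p A ^ 2 * ∑ k, ∑ j, (x j k) ^ 2 / p j := by
          rw [Finset.mul_sum]
          refine Finset.sum_congr rfl fun k _ => ?_
          rw [mul_pow, wnorm_sq hppos]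
      _ = matNorm p A ^ 2 * ∑ j, ‖x j‖ ^ 2 / p j := by
          congr 1
          rw [Finset.sum_comm]
          refine Finset.sum_congr rfl fun j _ => ?_
          rw [EuclideanSpace.norm_eq, Real.sq_sqrt (by positivity), Finset.sum_div]
          simp [Real.norm_eq_abs, sq_abs]
  exact (pow_le_pow_iff_left₀ (bnorm_nonneg _) (mul_nonneg hM (bnorm_nonneg _)) two_ne_zero).1 key

end op

section struct
variable {n d : ℕ} {p : Fin n → ℝ} (hppos : ∀ i, 0 < p i)

include hppos

lemma bnorm_cross (x x' : Fin n → EuclideanSpace ℝ (Fin d)) :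
    ∑ j, ‖x j‖ * ‖x' j‖ / p j ≤ bnorm p x * bnorm p x' := by
  have hCS := Finset.sum_mul_sq_le_sq_mul_sq Finset.univ
    (fun j => ‖x j‖ / Real.sqrt (p j)) (fun j => ‖x' j‖ / Real.sqrt (p j))
  have h1 : ∀ (u : Fin n → EuclideanSpace ℝ (Fin d)) (j : Fin n),
      (‖u j‖ / Real.sqrt (p j)) ^ 2 = ‖u j‖ ^ 2 / p j := by
    intro u j
    rw [div_pow, Real.sq_sqrt (hppos j).le]
  have h2 : ∀ j : Fin n, (‖x j‖ / Real.sqrt (p j)) * (‖x' j‖ / Real.sqrt (p j))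
      = ‖x j‖ * ‖x' j‖ / p j := by
    intro j
    rw [div_mul_div_comm, Real.mul_self_sqrt (hppos j).le]
  simp only [h1, h2] at hCS
  have hs : ∑ j, ‖x j‖ * ‖x' j‖ / p j
      = |∑ j, ‖x j‖ * ‖x' j‖ / p j| := by
    rw [abs_of_nonneg]
    exact Finset.sum_nonneg fun j _ => div_nonneg (mul_nonneg (norm_nonneg _) (norm_nonneg _)) (hppos j).le
  rw [hs, ← Real.sqrt_sq_eq_abs]
  calc Real.sqrt ((∑ j, ‖x j‖ * ‖x' j‖ / p j) ^ 2)
      ≤ Real.sqrt ((∑ j, ‖x j‖ ^ 2 / p j) * ∑ j, ‖x' j‖ ^ 2 / p j) := Real.sqrt_le_sqrt hCS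
    _ = bnorm p x * bnorm p x' := by
        rw [Real.sqrt_mul (Finset.sum_nonneg fun j _ => div_nonneg (sq_nonneg _) (hppos j).le)]
        rfl

lemma bnorm_add_le (x x' : Fin n → EuclideanSpace ℝ (Fin d)) :
    bnorm p (fun i => x i + x' i) ≤ bnorm p x + bnorm p x' := by
  have hkey : bnorm p (fun i => x i + x' i) ^ 2 ≤ (bnorm p x + bnorm p x') ^ 2 := by
    rw [bnorm_sq hppos]
    have hstep : ∑ j, ‖x j + x' j‖ ^ 2 / p j
        ≤ ∑ j, (‖x j‖ ^ 2 + 2 * (‖x j‖ * ‖x' j‖) + ‖x' j‖ ^ 2) / p j := by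
      refine Finset.sum_le_sum fun j _ => ?_
      refine (div_le_div_iff_of_pos_right (hppos j)).2 ?_
      have := norm_add_le (x j) (x' j)
      nlinarith [norm_nonneg (x j), norm_nonneg (x' j), norm_nonneg (x j + x' j)]
    refine hstep.trans ?_
    have hsplit : ∑ j, (‖x j‖ ^ 2 + 2 * (‖x j‖ * ‖x' j‖) + ‖x' j‖ ^ 2) / p j
        = (∑ j, ‖x j‖ ^ 2 / p j) + 2 * (∑ j, ‖x j‖ * ‖x' j‖ / p j)
          + ∑ j, ‖x' j‖ ^ 2 / p j := by
      rw [Finset.mul_sum, ← Finset.sum_add_distrib, ← Finset.sum_add_distrib]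
      refine Finset.sum_congr rfl fun j _ => ?_
      field_simp
    rw [hsplit]
    have hcross := bnorm_cross hppos x x'
    have hb1 := bnorm_sq hppos (p := p) x
    have hb2 := bnorm_sq hppos (p := p) x'
    nlinarith [bnorm_nonneg (p := p) x, bnorm_nonneg (p := p) x']
  exact (pow_le_pow_iff_left₀ (bnorm_nonneg _)
    (add_nonneg (bnorm_nonneg _) (bnorm_nonneg _)) two_ne_zero).1 hkey

lemma bnorm_smul (c : ℝ) (x : Fin n → EuclideanSpace ℝ (Fin d)) :
    bnorm p (fun i => c • x i) = |c| * bnorm p x := by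
  rw [bnorm, bnorm, ← Real.sqrt_sq_eq_abs,
    ← Real.sqrt_mul (sq_nonneg c), Finset.mul_sum]
  congr 1
  refine Finset.sum_congr rfl fun j _ => ?_
  rw [norm_smul, Real.norm_eq_abs, mul_pow, sq_abs, mul_div_assoc]

lemma bnorm_pointwise_smul (c : Fin n → ℝ) (v : EuclideanSpace ℝ (Fin d)) :
    bnorm p (fun j => c j • v) = wnorm p c * ‖v‖ := by
  rw [bnorm, wnorm, ← Real.sqrt_sq (norm_nonneg v),
    ← Real.sqrt_mul (Finset.sum_nonneg fun j _ => div_nonneg (sq_nonneg _) (hppos j).le),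
    Finset.sum_mul]
  congr 1
  refine Finset.sum_congr rfl fun j _ => ?_
  rw [norm_smul, Real.norm_eq_abs, mul_pow, sq_abs, div_mul_eq_mul_div]

end struct

lemma wnorm_smul {n : ℕ} {p : Fin n → ℝ} (hppos : ∀ i, 0 < p i) (c : ℝ) (x : Fin n → ℝ) :
    wnorm p (fun j => c * x j) = |c| * wnorm p x := by
  rw [wnorm, wnorm, ← Real.sqrt_sq_eq_abs,
    ← Real.sqrt_mul (sq_nonneg c), Finset.mul_sum]
  congr 1
  refine Finset.sum_congr rfl fun j _ => ?_
  rw [mul_pow, mul_div_assoc]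

/-- Under boundedness of A_t, the consensus error satisfies
‖w(t) − nπ⊗w̄(t)‖_{π⊗1_d} ≤ ρ^t ‖w(0) − nπ⊗w̄(0)‖_{π⊗1_d} + ασ_W R̄/(1−ρ),
with ρ = σ_W(1+αLδ) and R̄ = L D_1 R + D_2. -/
theorem consensus_error_convergence {n d : ℕ}
    (W : Matrix (Fin n) (Fin n) ℝ)
    (hWnn : ∀ i j, 0 ≤ W i j) (hWcol : ∀ j, ∑ i, W i j = 1)
    (p : Fin n → ℝ) (hppos : ∀ i, 0 < p i) (hpsum : ∑ i, p i = 1)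
    (hWp : W.mulVec p = p)
    (σW : ℝ) (hσW : σW = matNorm p (W - Matrix.of fun i _ => p i))
    (f : Fin n → EuclideanSpace ℝ (Fin d) → ℝ)
    (gf : Fin n → EuclideanSpace ℝ (Fin d) → EuclideanSpace ℝ (Fin d))
    (hgrad : ∀ i x, HasGradientAt (f i) (gf i x) x)
    (α : ℝ) (hα : 0 < α)
    (w z : ℕ → Fin n → EuclideanSpace ℝ (Fin d))
    (y : ℕ → Fin n → ℝ)
    (hy0 : y 0 = fun _ => 1) (hz0 : z 0 = w 0)
    (hyrec : ∀ t, y (t + 1) = W.mulVec (y t))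
    (hwrec : ∀ t, w (t + 1) = kron W (fun i => w t i - α • gf i (z t i)))
    (hzrec : ∀ t i, z (t + 1) i = (y (t + 1) i)⁻¹ • w (t + 1) i)
    (hypos : ∀ t i, 0 < y t i)
    (δ : ℝ) (hδ : IsLUB (Set.range fun q : ℕ × Fin n => (y q.1 q.2)⁻¹) δ)
    (wbar : ℕ → EuclideanSpace ℝ (Fin d))
    (hwbar : ∀ t, wbar t = (n : ℝ)⁻¹ • ∑ i, w t i)
    (L β : ℝ) (hL : 0 < L) (hβ : 0 < β)
    (hlip : ∀ i x x', ‖gf i x - gf i x'‖ ≤ L * ‖x - x'‖)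
    (hsc : ConvexOn ℝ Set.univ
      (fun x : EuclideanSpace ℝ (Fin d) =>
        (n : ℝ)⁻¹ * ∑ i, f i x - β / 2 * ‖x‖ ^ 2))
    (wstar : EuclideanSpace ℝ (Fin d))
    (hmin : ∀ x, (n : ℝ)⁻¹ * ∑ i, f i wstar ≤ (n : ℝ)⁻¹ * ∑ i, f i x)
    (hα2 : α ≤ 2 / (L + β))
    (ρ : ℝ) (hρ : ρ = σW * (1 + α * L * δ)) (hρ1 : ρ < 1)
    (R : ℝ) (hR : 0 < R) (hAR : ∀ t, ‖wbar t - wstar‖ ≤ R)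
    (D1 D2 Rbar : ℝ)
    (hD1 : D1 = δ * wnorm p (fun i => 1 - (n : ℝ) * p i) + Real.sqrt (∑ j, (p j)⁻¹))
    (hD2 : D2 = L * δ * wnorm p (fun i => 1 - (n : ℝ) * p i) * ‖wstar‖
        + bnorm p (fun i => gf i wstar))
    (hRbar : Rbar = L * D1 * R + D2)
    (t : ℕ) :
    bnorm p (fun i => w t i - ((n : ℝ) * p i) • wbar t)
      ≤ ρ ^ t * bnorm p (fun i => w 0 i - ((n : ℝ) * p i) • wbar 0)
        + α * σW * Rbar / (1 - ρ) := by
  -- n is positive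
  have hn : Nonempty (Fin n) := by
    rcases Nat.eq_zero_or_pos n with h0 | h
    · exfalso
      have hub : δ - 1 ∈ upperBounds (Set.range fun q : ℕ × Fin n => (y q.1 q.2)⁻¹) := by
        rintro r ⟨⟨q, i⟩, rfl⟩
        exact absurd i.2 (by omega)
      linarith [hδ.2 hub]
    · exact ⟨⟨0, h⟩⟩
  obtain ⟨i0⟩ := hn
  have hn0 : (0:ℝ) < (n:ℝ) := by exact_mod_cast i0.pos
  -- δ bounds
  have hδub : ∀ s i, (y s i)⁻¹ ≤ δ := fun s i => hδ.1 ⟨(s, i), rfl⟩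
  have hδ1 : (1:ℝ) ≤ δ := by
    have := hδub 0 i0
    rw [hy0] at this
    simpa using this
  have hδ0 : (0:ℝ) < δ := lt_of_lt_of_le one_pos hδ1
  -- σW bounds
  have hσ0 : 0 ≤ σW := hσW ▸ matNorm_nonneg _
  have hρ0 : 0 ≤ ρ := by
    rw [hρ]; exact mul_nonneg hσ0 (by positivity)
  have hσρ : σW ≤ ρ := by
    rw [hρ]
    nlinarith [mul_nonneg (mul_nonneg hα.le hL.le) hδ0.le]
  have hσ1 : σW < 1 := lt_of_le_of_lt hσρ hρ1
  -- basic facts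
  have hWpi : ∀ i, (∑ j, W i j * p j) = p i := by
    intro i
    have := congrFun hWp i
    simpa [Matrix.mulVec, dotProduct] using this
  have hz : ∀ s i, z s i = (y s i)⁻¹ • w s i := by
    intro s i
    cases s with
    | zero => rw [hz0, hy0]; simp
    | succ s => exact hzrec s i
  -- sum of y is n
  have hysum : ∀ s, ∑ i, y s i = (n:ℝ) := by
    intro s
    induction s with
    | zero => simp [hy0]
    | succ s ih =>
      rw [hyrec]
      calc ∑ i, W.mulVec (y s) i = ∑ i, ∑ j, W i j * y s j := by
            refine Finset.sum_congr rfl fun i _ => ?_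
            simp [Matrix.mulVec, dotProduct]
        _ = ∑ j, (∑ i, W i j) * y s j := by
            rw [Finset.sum_comm]
            exact Finset.sum_congr rfl fun j _ => (Finset.sum_mul _ _ _).symm
        _ = ∑ j, y s j := by
            refine Finset.sum_congr rfl fun j _ => ?_
            rw [hWcol j, one_mul]
        _ = (n:ℝ) := ih
  -- M := W - P
  set M : Matrix (Fin n) (Fin n) ℝ := W - Matrix.of fun i _ => p i with hM
  have hMσ : matNorm p M = σW := hσW.symm
  -- wnorm of y - np is bounded
  have hylem : ∀ s, wnorm p (fun i => y s i - (n:ℝ) * p i)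
      ≤ wnorm p (fun i => 1 - (n:ℝ) * p i) := by
    intro s
    induction s with
    | zero => rw [hy0]
    | succ s ih =>
      have hrec : (fun i => y (s+1) i - (n:ℝ) * p i)
          = M.mulVec (fun i => y s i - (n:ℝ) * p i) := by
        funext i
        have expand : M.mulVec (fun i => y s i - (n:ℝ) * p i) i
            = ∑ j, (W i j * y s j - (n:ℝ) * (W i j * p j)
              - p i * y s j + (n:ℝ) * (p i * p j)) := by
          rw [Matrix.mulVec, dotProduct]
          refine Finset.sum_congr rfl fun j _ => ?_
          simp only [hM, Matrix.sub_apply, Matrix.of_apply]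
          ring
        rw [expand, Finset.sum_add_distrib, Finset.sum_sub_distrib,
          Finset.sum_sub_distrib, ← Finset.mul_sum, ← Finset.mul_sum,
          ← Finset.mul_sum, hWpi i, hysum s]
        have hy1 : y (s+1) i = ∑ j, W i j * y s j := by
          rw [hyrec]
          simp [Matrix.mulVec, dotProduct]
        have hps : ∑ j, p i * p j = p i := by
          rw [← Finset.mul_sum, hpsum, mul_one]
        rw [hy1, hps]
        ring
      rw [hrec]
      calc wnorm p (M.mulVec (fun i => y s i - (n:ℝ) * p i))
          ≤ matNorm p M * wnorm p (fun i => y s i - (n:ℝ) * p i) :=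
            mat_bound hppos hpsum M _
        _ ≤ 1 * wnorm p (fun i => 1 - (n:ℝ) * p i) := by
            apply mul_le_mul (hMσ ▸ hσ1.le) ih (wnorm_nonneg _) zero_le_one
        _ = _ := one_mul _
  -- nonnegativity of Rbar
  have hW1nn : 0 ≤ wnorm p (fun i => 1 - (n:ℝ) * p i) := wnorm_nonneg _
  have hRbar0 : 0 ≤ Rbar := by
    rw [hRbar, hD1, hD2]
    exact add_nonneg
      (mul_nonneg (mul_nonneg hL.le
        (add_nonneg (mul_nonneg hδ0.le hW1nn) (Real.sqrt_nonneg _))) hR.le)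
      (add_nonneg (mul_nonneg (mul_nonneg (mul_nonneg hL.le hδ0.le) hW1nn)
        (norm_nonneg _)) (bnorm_nonneg _))
  have h1ρ : 0 < 1 - ρ := by linarith
  -- the one-step contraction
  have hstep : ∀ s, bnorm p (fun i => w (s+1) i - ((n:ℝ) * p i) • wbar (s+1))
      ≤ ρ * bnorm p (fun i => w s i - ((n:ℝ) * p i) • wbar s) + α * σW * Rbar := by
    intro s
    set g : Fin n → EuclideanSpace ℝ (Fin d) := fun j => gf j (z s j) with hg
    set e : Fin n → EuclideanSpace ℝ (Fin d) :=
      fun j => w s j - ((n:ℝ) * p j) • wbar s with he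
    -- average recursion
    have hwbar1 : wbar (s+1) = (n:ℝ)⁻¹ • ∑ j, (w s j - α • g j) := by
      rw [hwbar, hwrec]
      congr 1
      calc ∑ i, kron W (fun j => w s j - α • gf j (z s j)) i
          = ∑ i, ∑ j, W i j • (w s j - α • g j) := rfl
        _ = ∑ j, ∑ i, W i j • (w s j - α • g j) := Finset.sum_comm
        _ = ∑ j, (∑ i, W i j) • (w s j - α • g j) := by
            exact Finset.sum_congr rfl fun j _ => (Finset.sum_smul).symm
        _ = ∑ j, (w s j - α • g j) := by
            exact Finset.sum_congr rfl fun j _ => by rw [hWcol j, one_smul]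
    -- error recursion
    have hfun : (fun i => w (s+1) i - ((n:ℝ) * p i) • wbar (s+1))
        = kron M (fun j => e j - α • g j) := by
      funext i
      rw [hwrec, hwbar1]
      show (∑ j, W i j • (w s j - α • g j))
          - ((n:ℝ) * p i) • ((n:ℝ)⁻¹ • ∑ j, (w s j - α • g j)) = _
      have hsm : ((n:ℝ) * p i) • ((n:ℝ)⁻¹ • ∑ j, (w s j - α • g j))
          = p i • ∑ j, (w s j - α • g j) := by
        rw [smul_smul]
        congr 1
        field_simp
      rw [hsm, Finset.smul_sum, ← Finset.sum_sub_distrib]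
      have hzero : ∑ j, (W i j - p i) • (((n:ℝ) * p j) • wbar s) = 0 := by
        have h1 : ∀ j : Fin n, (W i j - p i) • (((n:ℝ) * p j) • wbar s)
            = ((W i j - p i) * ((n:ℝ) * p j)) • wbar s := fun j => smul_smul _ _ _
        simp only [h1]
        rw [← Finset.sum_smul]
        have h2 : ∑ j, (W i j - p i) * ((n:ℝ) * p j) = 0 := by
          have h3 : ∀ j : Fin n, (W i j - p i) * ((n:ℝ) * p j)
              = (n:ℝ) * (W i j * p j) - (n:ℝ) * (p i * p j) := fun j => by ring
          simp only [h3]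
          rw [Finset.sum_sub_distrib, ← Finset.mul_sum, hWpi i,
            ← Finset.mul_sum, ← Finset.mul_sum, hpsum]
          ring
        rw [h2, zero_smul]
      have hu : ∀ j, w s j - α • g j = (e j - α • g j) + ((n:ℝ) * p j) • wbar s := by
        intro j
        rw [he]
        module
      calc ∑ j, (W i j • (w s j - α • g j) - p i • (w s j - α • g j))
          = ∑ j, (W i j - p i) • (w s j - α • g j) :=
            Finset.sum_congr rfl fun j _ => (sub_smul _ _ _).symm
        _ = ∑ j, ((W i j - p i) • (e j - α • g j)
              + (W i j - p i) • (((n:ℝ) * p j) • wbar s)) :=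
            Finset.sum_congr rfl fun j _ => by rw [hu j, smul_add]
        _ = (∑ j, (W i j - p i) • (e j - α • g j))
              + ∑ j, (W i j - p i) • (((n:ℝ) * p j) • wbar s) :=
            Finset.sum_add_distrib
        _ = ∑ j, (W i j - p i) • (e j - α • g j) := by rw [hzero, add_zero]
        _ = kron M (fun j => e j - α • g j) i := by
            rw [kron]
            refine Finset.sum_congr rfl fun j _ => ?_
            simp [hM, Matrix.sub_apply]
    -- decomposition of z - wstar
    have hzdec : ∀ j, z s j - wstar
        = ((y s j)⁻¹ • e j + (wbar s - wstar))
          + (((y s j)⁻¹ * ((n:ℝ) * p j - y s j)) • (wbar s - wstar)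
            + ((y s j)⁻¹ * ((n:ℝ) * p j - y s j)) • wstar) := by
      intro j
      have hw : w s j = e j + ((n:ℝ) * p j) • wbar s := by rw [he]; module
      rw [hz s j, hw]
      have hyj : y s j ≠ 0 := (hypos s j).ne'
      match_scalars <;> field_simp <;> ring
    -- term bounds
    have hz1 : bnorm p (fun j => (y s j)⁻¹ • e j) ≤ δ * bnorm p e := by
      have hm : ∀ j, ‖(y s j)⁻¹ • e j‖ ≤ ‖δ • e j‖ := by
        intro j
        rw [norm_smul, norm_smul, Real.norm_eq_abs, Real.norm_eq_abs,
          abs_of_nonneg (inv_nonneg.2 (hypos s j).le), abs_of_nonneg hδ0.le]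
        exact mul_le_mul_of_nonneg_right (hδub s j) (norm_nonneg _)
      calc bnorm p (fun j => (y s j)⁻¹ • e j) ≤ bnorm p (fun j => δ • e j) :=
            bnorm_mono hppos hm
        _ = δ * bnorm p e := by rw [bnorm_smul hppos, abs_of_nonneg hδ0.le]
    have hz2 : bnorm p (fun _ : Fin n => wbar s - wstar)
        ≤ Real.sqrt (∑ j, (p j)⁻¹) * R := by
      have h1 : bnorm p (fun _ : Fin n => wbar s - wstar)
          = bnorm p (fun j : Fin n => (fun _ : Fin n => (1:ℝ)) j • (wbar s - wstar)) := by
        simp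
      rw [h1, bnorm_pointwise_smul hppos]
      have hw1 : wnorm p (fun _ : Fin n => (1:ℝ)) = Real.sqrt (∑ j, (p j)⁻¹) := by
        rw [wnorm]
        congr 1
        exact Finset.sum_congr rfl fun j _ => by rw [one_pow, one_div]
      rw [hw1]
      exact mul_le_mul_of_nonneg_left (hAR s) (Real.sqrt_nonneg _)
    have hcb : wnorm p (fun j => (y s j)⁻¹ * ((n:ℝ) * p j - y s j))
        ≤ δ * wnorm p (fun i => 1 - (n:ℝ) * p i) := by
      have step1 : wnorm p (fun j => (y s j)⁻¹ * ((n:ℝ) * p j - y s j))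
          ≤ wnorm p (fun j => δ * (y s j - (n:ℝ) * p j)) := by
        apply wnorm_mono hppos
        intro j
        rw [abs_mul, abs_mul, abs_sub_comm ((n:ℝ) * p j) (y s j)]
        refine mul_le_mul_of_nonneg_right ?_ (abs_nonneg _)
        rw [abs_of_nonneg (inv_nonneg.2 (hypos s j).le), abs_of_nonneg hδ0.le]
        exact hδub s j
      refine step1.trans ?_
      rw [wnorm_smul hppos, abs_of_nonneg hδ0.le]
      exact mul_le_mul_of_nonneg_left (hylem s) hδ0.le
    -- combine: bound on z - wstar
    have hzb : bnorm p (fun j => z s j - wstar)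
        ≤ δ * bnorm p e + (Real.sqrt (∑ j, (p j)⁻¹) * R
          + (δ * wnorm p (fun i => 1 - (n:ℝ) * p i) * R
            + δ * wnorm p (fun i => 1 - (n:ℝ) * p i) * ‖wstar‖)) := by
      have hre : (fun j => z s j - wstar) = fun j =>
          ((y s j)⁻¹ • e j + (wbar s - wstar))
          + (((y s j)⁻¹ * ((n:ℝ) * p j - y s j)) • (wbar s - wstar)
            + ((y s j)⁻¹ * ((n:ℝ) * p j - y s j)) • wstar) := funext hzdec
      rw [hre]
      have t1 := bnorm_add_le hppos
        (fun j => (y s j)⁻¹ • e j + (wbar s - wstar))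
        (fun j => ((y s j)⁻¹ * ((n:ℝ) * p j - y s j)) • (wbar s - wstar)
          + ((y s j)⁻¹ * ((n:ℝ) * p j - y s j)) • wstar)
      have t2 := bnorm_add_le hppos
        (fun j => (y s j)⁻¹ • e j) (fun _ => wbar s - wstar)
      have t3 := bnorm_add_le hppos
        (fun j => ((y s j)⁻¹ * ((n:ℝ) * p j - y s j)) • (wbar s - wstar))
        (fun j => ((y s j)⁻¹ * ((n:ℝ) * p j - y s j)) • wstar)
      have t4 : bnorm p (fun j => ((y s j)⁻¹ * ((n:ℝ) * p j - y s j)) • (wbar s - wstar))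
          ≤ δ * wnorm p (fun i => 1 - (n:ℝ) * p i) * R := by
        rw [bnorm_pointwise_smul hppos]
        exact mul_le_mul hcb (hAR s) (norm_nonneg _)
          (mul_nonneg hδ0.le hW1nn)
      have t5 : bnorm p (fun j => ((y s j)⁻¹ * ((n:ℝ) * p j - y s j)) • wstar)
          ≤ δ * wnorm p (fun i => 1 - (n:ℝ) * p i) * ‖wstar‖ := by
        rw [bnorm_pointwise_smul hppos]
        exact mul_le_mul_of_nonneg_right hcb (norm_nonneg _)
      linarith
    -- gradient bound
    have hgb : bnorm p g ≤ L * δ * bnorm p e + Rbar := by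
      have hsplit : g = fun j => (gf j (z s j) - gf j wstar) + gf j wstar := by
        funext j
        rw [hg]
        module
      rw [hsplit]
      have t1 := bnorm_add_le hppos
        (fun j => gf j (z s j) - gf j wstar) (fun j => gf j wstar)
      have t2 : bnorm p (fun j => gf j (z s j) - gf j wstar)
          ≤ L * bnorm p (fun j => z s j - wstar) := by
        have hm : ∀ j, ‖gf j (z s j) - gf j wstar‖ ≤ ‖L • (z s j - wstar)‖ := by
          intro j
          rw [norm_smul, Real.norm_eq_abs, abs_of_nonneg hL.le]
          exact hlip j _ _
        have h3 := bnorm_mono hppos hm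
        rwa [bnorm_smul hppos, abs_of_nonneg hL.le] at h3
      have t6 : L * bnorm p (fun j => z s j - wstar)
          ≤ L * (δ * bnorm p e + (Real.sqrt (∑ j, (p j)⁻¹) * R
            + (δ * wnorm p (fun i => 1 - (n:ℝ) * p i) * R
              + δ * wnorm p (fun i => 1 - (n:ℝ) * p i) * ‖wstar‖))) :=
        mul_le_mul_of_nonneg_left hzb hL.le
      have hreq : L * (δ * bnorm p e + (Real.sqrt (∑ j, (p j)⁻¹) * R
            + (δ * wnorm p (fun i => 1 - (n:ℝ) * p i) * R
              + δ * wnorm p (fun i => 1 - (n:ℝ) * p i) * ‖wstar‖)))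
            + bnorm p (fun j => gf j wstar)
          = L * δ * bnorm p e + Rbar := by
        rw [hRbar, hD1, hD2]
        ring
      linarith
    -- put it together
    calc bnorm p (fun i => w (s+1) i - ((n:ℝ) * p i) • wbar (s+1))
        = bnorm p (kron M (fun j => e j - α • g j)) := by rw [hfun]
      _ ≤ matNorm p M * bnorm p (fun j => e j - α • g j) := kron_bound hppos hpsum M _
      _ = σW * bnorm p (fun j => e j - α • g j) := by rw [hMσ]
      _ ≤ σW * (bnorm p e + α * bnorm p g) := by
          refine mul_le_mul_of_nonneg_left ?_ hσ0
          have h1 : (fun j => e j - α • g j) = fun j => e j + (-α) • g j := by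
            funext j
            module
          rw [h1]
          have h2 := bnorm_add_le hppos e (fun j => (-α) • g j)
          rwa [bnorm_smul hppos, abs_neg, abs_of_nonneg hα.le] at h2
      _ ≤ σW * (bnorm p e + α * (L * δ * bnorm p e + Rbar)) := by
          refine mul_le_mul_of_nonneg_left ?_ hσ0
          have h2 := mul_le_mul_of_nonneg_left hgb hα.le
          linarith
      _ = σW * (1 + α * L * δ) * bnorm p e + α * σW * Rbar := by ring
      _ = ρ * bnorm p e + α * σW * Rbar := by rw [hρ]
  -- final induction
  have hc0 : 0 ≤ α * σW * Rbar := mul_nonneg (mul_nonneg hα.le hσ0) hRbar0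
  induction t with
  | zero =>
    simp only [pow_zero, one_mul]
    have h4 : 0 ≤ α * σW * Rbar / (1 - ρ) := div_nonneg hc0 h1ρ.le
    linarith
  | succ s ih =>
    have hkey : ρ * (α * σW * Rbar / (1 - ρ)) + α * σW * Rbar
        = α * σW * Rbar / (1 - ρ) := by
      field_simp
      ring
    calc bnorm p (fun i => w (s+1) i - ((n:ℝ) * p i) • wbar (s+1))
        ≤ ρ * bnorm p (fun i => w s i - ((n:ℝ) * p i) • wbar s) + α * σW * Rbar :=
          hstep s
      _ ≤ ρ * (ρ ^ s * bnorm p (fun i => w 0 i - ((n:ℝ) * p i) • wbar 0)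
            + α * σW * Rbar / (1 - ρ)) + α * σW * Rbar :=
          add_le_add (mul_le_mul_of_nonneg_left ih hρ0) le_rfl
      _ = ρ ^ (s+1) * bnorm p (fun i => w 0 i - ((n:ℝ) * p i) • wbar 0)
            + (ρ * (α * σW * Rbar / (1 - ρ)) + α * σW * Rbar) := by ring
      _ = _ := by rw [hkey]
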